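/- Consider a single group of n individuals with covariates L taking values in a measurable space, a random treatment vector A in {0,1}^n, and potential event times T_j(a) >= 0 for each individual j in {1,...,n} and each a in {0,1}^n. Let p(L, a) be a version of the conditional probability P(A = a | L), and assume: (I) the collection of potential event times {T_j(a) : j, a} is conditionally independent of A given L, and (II) p(L, a) > 0 almost surely for every a in {0,1}^n. Then for every t >= 0, a in {0,1}, alpha in (0,1), and every j: E[ pi(A_{-j}; alpha) * I(A_j = a) * I( T_j(A) <= t ) / p(L, A) ] = E[ sum over a_{-j} in {0,1}^{n-1} of pi(a_{-j}; alpha) * I( T_j(a, a_{-j}) <= t ) ]. -/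

import Mathlib

/-!
The weight `1 / p (L, b)` is `σ(L)`-measurable, so it can be pulled out of the conditional
expectation of `1{Tⱼ(b) ≤ t, A = b}` given `L`. By (I) that conditional expectation factorises as
`P(Tⱼ(b) ≤ t | L) · p (L, b)`, and the weight cancels the propensity score, leaving
`P(Tⱼ(b) ≤ t)`. Doing this with Lebesgue integrals makes the unbounded weight harmless and gives
integrability at the same time. Summing over the `b` with `bⱼ = a` gives the claim.
-/

open MeasureTheory ProbabilityTheory Finset
open scoped ENNReal

namespace MeasureTheory

variable {Ω : Type*} {m m₀ : MeasurableSpace Ω} {μ : Measure[m₀] Ω}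

theorem lintegral_condLExp_mul (hm : m ≤ m₀) [SigmaFinite (μ.trim hm)] {g X : Ω → ℝ≥0∞}
    (hg : Measurable[m] g) (hX : AEMeasurable X μ) :
    ∫⁻ ω, μ⁻[X|m] ω * g ω ∂μ = ∫⁻ ω, X ω * g ω ∂μ := by
  have hg₀ : AEMeasurable g μ := (hg.mono hm le_rfl).aemeasurable
  have htrim : (μ.withDensity X).trim hm = (μ.withDensity μ⁻[X|m]).trim hm := by
    refine @Measure.ext _ m _ _ fun s hs => ?_
    rw [trim_measurableSet_eq hm hs, trim_measurableSet_eq hm hs,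
      withDensity_apply _ (hm s hs), withDensity_apply _ (hm s hs), setLIntegral_condLExp _ _ _ hs]
  calc ∫⁻ ω, μ⁻[X|m] ω * g ω ∂μ = ∫⁻ ω, g ω ∂((μ.withDensity μ⁻[X|m]).trim hm) := by
        rw [lintegral_trim hm hg,
          lintegral_withDensity_eq_lintegral_mul₀ (measurable_condLExp' m μ X).aemeasurable hg₀]
        rfl
    _ = ∫⁻ ω, X ω * g ω ∂μ := by
        rw [← htrim, lintegral_trim hm hg, lintegral_withDensity_eq_lintegral_mul₀ hX hg₀]
        rfl

theorem lintegral_ofReal_condExp_mul (hm : m ≤ m₀) [SigmaFinite (μ.trim hm)] {g : Ω → ℝ≥0∞}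
    (hg : Measurable[m] g) {f : Ω → ℝ} (hf : Integrable f μ) (hf₀ : 0 ≤ᵐ[μ] f) :
    ∫⁻ ω, ENNReal.ofReal (μ[f|m] ω) * g ω ∂μ = ∫⁻ ω, ENNReal.ofReal (f ω) * g ω ∂μ := by
  rw [← lintegral_condLExp_mul hm hg hf.1.aemeasurable.ennreal_ofReal]
  refine lintegral_congr_ae ?_
  filter_upwards [condLExp_ofReal m hf hf₀] with ω hω
  rw [hω]

variable [IsFiniteMeasure μ] {S B : Set Ω} {p : Ω → ℝ}

theorem lintegral_ofReal_indicator_inter_div (hm : m ≤ m₀) (hS : MeasurableSet S)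
    (hB : MeasurableSet B) (hmul : μ⟦S ∩ B | m⟧ =ᵐ[μ] fun ω => (μ⟦S | m⟧) ω * (μ⟦B | m⟧) ω)
    (hp : p =ᵐ[μ] μ⟦B | m⟧) (hpos : ∀ᵐ ω ∂μ, 0 < p ω) :
    ∫⁻ ω, ENNReal.ofReal ((S ∩ B).indicator (fun _ => (1 : ℝ)) ω / p ω) ∂μ = μ S := by
  have : IsFiniteMeasure (μ.trim hm) := isFiniteMeasure_trim hm
  have hqpos : ∀ᵐ ω ∂μ, 0 < (μ⟦B | m⟧) ω := by
    filter_upwards [hp, hpos] with ω hpω hω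
    rwa [← hpω]
  have hinv : Measurable[m] fun ω => (ENNReal.ofReal ((μ⟦B | m⟧) ω))⁻¹ :=
    stronglyMeasurable_condExp.measurable.ennreal_ofReal.inv
  have hind : ∀ {s}, MeasurableSet s → Integrable (s.indicator fun _ => (1 : ℝ)) μ :=
    fun hs => (integrable_const 1).indicator hs
  have hind₀ : ∀ s : Set Ω, 0 ≤ᵐ[μ] s.indicator fun _ => (1 : ℝ) :=
    fun s => .of_forall fun ω => Set.indicator_nonneg (fun _ _ => zero_le_one) ω
  calc ∫⁻ ω, ENNReal.ofReal ((S ∩ B).indicator (fun _ => (1 : ℝ)) ω / p ω) ∂μ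
      = ∫⁻ ω, ENNReal.ofReal ((S ∩ B).indicator (fun _ => (1 : ℝ)) ω) *
          (ENNReal.ofReal ((μ⟦B | m⟧) ω))⁻¹ ∂μ := by
        refine lintegral_congr_ae ?_
        filter_upwards [hp, hpos] with ω hpω hω
        rw [ENNReal.ofReal_div_of_pos hω, div_eq_mul_inv, hpω]
    _ = ∫⁻ ω, ENNReal.ofReal ((μ⟦S ∩ B | m⟧) ω) * (ENNReal.ofReal ((μ⟦B | m⟧) ω))⁻¹ ∂μ :=
        (lintegral_ofReal_condExp_mul hm hinv (hind (hS.inter hB)) (hind₀ _)).symm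
    _ = ∫⁻ ω, ENNReal.ofReal ((μ⟦S | m⟧) ω) * 1 ∂μ := by
        refine lintegral_congr_ae ?_
        filter_upwards [hmul, hqpos] with ω hmulω hω
        rw [hmulω, ENNReal.ofReal_mul' hω.le, mul_assoc,
          ENNReal.mul_inv_cancel (ENNReal.ofReal_pos.2 hω).ne' ENNReal.ofReal_ne_top]
    _ = ∫⁻ ω, ENNReal.ofReal (S.indicator (fun _ => (1 : ℝ)) ω) * 1 ∂μ :=
        lintegral_ofReal_condExp_mul hm measurable_const (hind hS) (hind₀ S)
    _ = μ S := by
        rw [← lintegral_indicator_one hS]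
        congr with ω
        by_cases hω : ω ∈ S <;> simp [hω]

theorem integrable_indicator_inter_div (hm : m ≤ m₀) (hS : MeasurableSet S)
    (hB : MeasurableSet B) (hmul : μ⟦S ∩ B | m⟧ =ᵐ[μ] fun ω => (μ⟦S | m⟧) ω * (μ⟦B | m⟧) ω)
    (hp : p =ᵐ[μ] μ⟦B | m⟧) (hpos : ∀ᵐ ω ∂μ, 0 < p ω) :
    Integrable (fun ω => (S ∩ B).indicator (fun _ => (1 : ℝ)) ω / p ω) μ := by
  have hp_meas : AEMeasurable p μ :=
    (stronglyMeasurable_condExp.mono hm).measurable.aemeasurable.congr hp.symm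
  refine (lintegral_ofReal_ne_top_iff_integrable ?_ ?_).1 ?_
  · exact ((measurable_const.indicator (hS.inter hB)).aemeasurable.div hp_meas).aestronglyMeasurable
  · filter_upwards [hpos] with ω hω
    exact div_nonneg (Set.indicator_nonneg (fun _ _ => zero_le_one) ω) hω.le
  · rw [lintegral_ofReal_indicator_inter_div hm hS hB hmul hp hpos]
    exact measure_ne_top μ S

theorem integral_indicator_inter_div (hm : m ≤ m₀) (hS : MeasurableSet S)
    (hB : MeasurableSet B) (hmul : μ⟦S ∩ B | m⟧ =ᵐ[μ] fun ω => (μ⟦S | m⟧) ω * (μ⟦B | m⟧) ω)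
    (hp : p =ᵐ[μ] μ⟦B | m⟧) (hpos : ∀ᵐ ω ∂μ, 0 < p ω) :
    ∫ ω, (S ∩ B).indicator (fun _ => (1 : ℝ)) ω / p ω ∂μ = μ.real S := by
  have hint := integrable_indicator_inter_div hm hS hB hmul hp hpos
  rw [integral_eq_lintegral_of_nonneg_ae ?_ hint.1,
    lintegral_ofReal_indicator_inter_div hm hS hB hmul hp hpos, measureReal_def]
  filter_upwards [hpos] with ω hω
  exact div_nonneg (Set.indicator_nonneg (fun _ _ => zero_le_one) ω) hω.le

end MeasureTheory

section Propensity

variable {Ω 𝓛 β γ : Type*} [MeasureSpace Ω] [IsProbabilityMeasure (ℙ : Measure Ω)]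
  [StandardBorelSpace Ω] [MeasurableSpace 𝓛] [MeasurableSpace β] [MeasurableSingletonClass β]
  [MeasurableSpace γ] {L : Ω → 𝓛} {A : Ω → β} {T : Ω → γ} {s : Set γ} {b : β} {q : Ω → ℝ}

theorem integrable_ipw (hL : Measurable L) (hA : Measurable A) (hT : Measurable T)
    (hCI : CondIndepFun (MeasurableSpace.comap L inferInstance) hL.comap_le T A ℙ)
    (hs : MeasurableSet s) (hq : q =ᵐ[ℙ] ℙ⟦A ⁻¹' {b} | MeasurableSpace.comap L inferInstance⟧)
    (hqpos : ∀ᵐ ω ∂ℙ, 0 < q ω) :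
    Integrable (fun ω => (T ⁻¹' s ∩ A ⁻¹' {b}).indicator (fun _ => (1 : ℝ)) ω / q ω) ℙ :=
  integrable_indicator_inter_div hL.comap_le (hT hs) (hA (.singleton b))
    ((condIndepFun_iff_condExp_inter_preimage_eq_mul hT hA).1 hCI s {b} hs (.singleton b))
    hq hqpos

theorem integral_ipw (hL : Measurable L) (hA : Measurable A) (hT : Measurable T)
    (hCI : CondIndepFun (MeasurableSpace.comap L inferInstance) hL.comap_le T A ℙ)
    (hs : MeasurableSet s) (hq : q =ᵐ[ℙ] ℙ⟦A ⁻¹' {b} | MeasurableSpace.comap L inferInstance⟧)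
    (hqpos : ∀ᵐ ω ∂ℙ, 0 < q ω) :
    ∫ ω, (T ⁻¹' s ∩ A ⁻¹' {b}).indicator (fun _ => (1 : ℝ)) ω / q ω =
      (ℙ : Measure Ω).real (T ⁻¹' s) :=
  integral_indicator_inter_div hL.comap_le (hT hs) (hA (.singleton b))
    ((condIndepFun_iff_condExp_inter_preimage_eq_mul hT hA).1 hCI s {b} hs (.singleton b))
    hq hqpos

end Propensity

theorem tv_ipw_unbiased_general
    {Ω : Type*} [MeasureSpace Ω] [IsProbabilityMeasure (ℙ : Measure Ω)]
    [StandardBorelSpace Ω]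
    {𝓛 : Type*} [MeasurableSpace 𝓛]
    (n : ℕ) (L : Ω → 𝓛) (A : Ω → Fin n → Bool)
    (T : Ω → Fin n → (Fin n → Bool) → ℝ)
    (hL : Measurable L) (hA : Measurable A) (hT : Measurable T)
    (p : 𝓛 → (Fin n → Bool) → ℝ)
    -- `p (L, b)` is a version of the conditional probability `P(A = b | L)`
    (hp : ∀ b : Fin n → Bool,
      (fun ω => p (L ω) b)
        =ᵐ[(ℙ : Measure Ω)]
      (ℙ : Measure Ω)[(fun ω => if A ω = b then (1 : ℝ) else 0) |
        MeasurableSpace.comap L inferInstance])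
    -- (I) conditionally independent treatment: `{T j b} ⫫ A ∣ L`
    (hCI : CondIndepFun (MeasurableSpace.comap L inferInstance) hL.comap_le T A
      (ℙ : Measure Ω))
    -- (II) treatment positivity
    (hppos : ∀ b : Fin n → Bool, ∀ᵐ ω ∂(ℙ : Measure Ω), 0 < p (L ω) b)
    (t : ℝ) (a : Bool) (α : ℝ) (j : Fin n) :
    ∫ ω : Ω,
        (∏ k ∈ Finset.univ.erase j, (if A ω k then α else 1 - α)) *
          (if A ω j = a then (1 : ℝ) else 0) *
          (if T ω j (A ω) ≤ t then (1 : ℝ) else 0) / p (L ω) (A ω) ∂ℙ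
      = ∫ ω : Ω,
          ∑ b ∈ Finset.univ.filter (fun b : Fin n → Bool => b j = a),
            (∏ k ∈ Finset.univ.erase j, (if b k then α else 1 - α)) *
              (if T ω j b ≤ t then (1 : ℝ) else 0) ∂ℙ := by
  classical
  let π : (Fin n → Bool) → ℝ := fun b => ∏ k ∈ univ.erase j, if b k then α else 1 - α
  let F := univ.filter fun b : Fin n → Bool => b j = a
  let S : (Fin n → Bool) → Set (Fin n → (Fin n → Bool) → ℝ) := fun b => {f | f j b ≤ t}
  have hS : ∀ b, MeasurableSet (S b) := fun b => measurableSet_le (by fun_prop) measurable_const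
  have hpB : ∀ b, (fun ω => p (L ω) b) =ᵐ[ℙ]
      ℙ⟦A ⁻¹' {b} | MeasurableSpace.comap L inferInstance⟧ := by
    intro b
    convert hp b using 3 with ω
    simp [Set.indicator_apply]
  have hlhs : ∀ ω, (∏ k ∈ univ.erase j, if A ω k then α else 1 - α) *
      (if A ω j = a then (1 : ℝ) else 0) * (if T ω j (A ω) ≤ t then (1 : ℝ) else 0) /
        p (L ω) (A ω) =
      ∑ b ∈ F, π b * ((T ⁻¹' S b ∩ A ⁻¹' {b}).indicator (fun _ => (1 : ℝ)) ω / p (L ω) b) := by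
    intro ω
    have hterm : ∀ b, π b * ((T ⁻¹' S b ∩ A ⁻¹' {b}).indicator (fun _ => (1 : ℝ)) ω / p (L ω) b) =
        if A ω = b then π b * ((if T ω j b ≤ t then (1 : ℝ) else 0) / p (L ω) b) else 0 := by
      intro b
      by_cases hb : A ω = b <;> simp [S, Set.indicator_apply, hb]
    simp only [hterm, sum_ite_eq, F, mem_filter, mem_univ, true_and]
    split_ifs <;> simp [π, div_eq_mul_inv]
  have hrhs : ∀ ω b, (if T ω j b ≤ t then (1 : ℝ) else 0) = (T ⁻¹' S b).indicator 1 ω := by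
    intro ω b
    simp [S, Set.indicator_apply]
  calc _ = ∑ b ∈ F, π b * ∫ ω, (T ⁻¹' S b ∩ A ⁻¹' {b}).indicator (fun _ => (1 : ℝ)) ω /
        p (L ω) b ∂ℙ := by
        simp_rw [hlhs]
        rw [integral_finsetSum _ fun b _ =>
          (integrable_ipw hL hA hT hCI (hS b) (hpB b) (hppos b)).const_mul _]
        simp_rw [integral_const_mul]
    _ = ∑ b ∈ F, π b * (ℙ : Measure Ω).real (T ⁻¹' S b) := by
        simp_rw [integral_ipw hL hA hT hCI (hS _) (hpB _) (hppos _)]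
    _ = _ := by
        simp_rw [hrhs]
        rw [integral_finsetSum _ fun b _ =>
          ((integrable_const 1).indicator (hT (hS b))).const_mul _]
        simp_rw [integral_const_mul, integral_indicator_one (hT (hS _))]
        rfl

/-- **Unbiasedness of the Tchetgen Tchetgen–VanderWeele IPW estimator (no censoring).**
With covariates `L`, treatment vector `A ∈ {0,1}^n`, and potential event times `T j b ≥ 0`:
if (I) the potential event times are conditionally independent of the treatment given `L`, and
(II) the group propensity score `p (L, b)` (a version of `P(A = b | L)`) is a.s. positive for
every `b`, then for every `t ≥ 0`, individual treatment `a`, allocation `α ∈ (0,1)` and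
individual `j`,
`E[ π(A₋ⱼ;α) I(Aⱼ = a) I(Tⱼ(A) ≤ t) / p(L, A) ]
  = E[ ∑_{a₋ⱼ} I(Tⱼ(a, a₋ⱼ) ≤ t) π(a₋ⱼ; α) ]`. -/
theorem tv_ipw_unbiased
    {Ω : Type*} [MeasureSpace Ω] [IsProbabilityMeasure (ℙ : Measure Ω)]
    [StandardBorelSpace Ω] [Nonempty Ω]
    {𝓛 : Type*} [MeasurableSpace 𝓛]
    (n : ℕ) (L : Ω → 𝓛) (A : Ω → Fin n → Bool)
    (T : Ω → Fin n → (Fin n → Bool) → ℝ)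
    (hL : Measurable L) (hA : Measurable A) (hT : Measurable T)
    (hTnn : ∀ ω j b, 0 ≤ T ω j b)
    (p : 𝓛 → (Fin n → Bool) → ℝ)
    -- `p (L, b)` is a version of the conditional probability `P(A = b | L)`
    (hp : ∀ b : Fin n → Bool,
      (fun ω => p (L ω) b)
        =ᵐ[(ℙ : Measure Ω)]
      (ℙ : Measure Ω)[(fun ω => if A ω = b then (1 : ℝ) else 0) |
        MeasurableSpace.comap L inferInstance])
    -- (I) conditionally independent treatment: `{T j b} ⫫ A ∣ L`
    (hCI : CondIndepFun (MeasurableSpace.comap L inferInstance) hL.comap_le T A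
      (ℙ : Measure Ω))
    -- (II) treatment positivity
    (hppos : ∀ b : Fin n → Bool, ∀ᵐ ω ∂(ℙ : Measure Ω), 0 < p (L ω) b)
    (t : ℝ) (ht : 0 ≤ t) (a : Bool) (α : ℝ) (hα : α ∈ Set.Ioo (0 : ℝ) 1) (j : Fin n) :
    ∫ ω : Ω,
        (∏ k ∈ Finset.univ.erase j, (if A ω k then α else 1 - α)) *
          (if A ω j = a then (1 : ℝ) else 0) *
          (if T ω j (A ω) ≤ t then (1 : ℝ) else 0) / p (L ω) (A ω) ∂ℙ
      = ∫ ω : Ω,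
          ∑ b ∈ Finset.univ.filter (fun b : Fin n → Bool => b j = a),
            (∏ k ∈ Finset.univ.erase j, (if b k then α else 1 - α)) *
              (if T ω j b ≤ t then (1 : ℝ) else 0) ∂ℙ :=
  tv_ipw_unbiased_general n L A T hL hA hT p hp hCI hppos t a α j
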